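/- Let n ≥ 1, let H be a Hilbert space, and let T = (T₁,…,Tₙ) be a nilpotent n-tuple of bounded operators on H of index m ≥ 2, i.e. T_α = 0 for every α ∈ 𝔽ₙ⁺ with |α| = m and T_β ≠ 0 for some β with |β| = m−1. Then there exists a weight sequence μ = {μ_β}_{|β|≥1} of nonnegative reals, with μ_β > 0 for 1 ≤ |β| ≤ m−1 and μ_β = 0 for |β| ≥ m, whose associated weighted left multi-shift W = (W₁,…,Wₙ) on F²(Hₙ) is nilpotent of index m, and such that: there exist a closed subspace M ⊆ ℓ²(𝔽ₙ⁺; H) invariant under each W_i^*⊗I_H and a bounded invertible operator X : H → M with ‖X‖·‖X⁻¹‖ ≤ √(∑_{k=0}^{m−1} 1/(k+1)²) and T_i^* = X⁻¹((W_i^*⊗I_H)|_M)X for each i; consequently ‖∑_α c_α T_α‖ ≤ √(∑_{k=0}^{m−1} 1/(k+1)²)·‖∑_α c_α W_α‖ for every finitely supported family (c_α)_{α∈𝔽ₙ⁺} of complex numbers. -/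

import Mathlib

open Filter ContinuousLinearMap
open scoped ComplexConjugate

noncomputable section

attribute [local instance] Classical.decEq

abbrev Word (n : ℕ) := FreeMonoid (Fin n)

abbrev Fock (n : ℕ) := lp (fun _ : Word n => ℂ) 2

def fockE {n : ℕ} (α : Word n) : Fock n := lp.single 2 α 1

def wordOp {n : ℕ} {H : Type*} [NormedAddCommGroup H] [InnerProductSpace ℂ H]
    (T : Fin n → H →L[ℂ] H) (α : Word n) : H →L[ℂ] H :=
  ((FreeMonoid.toList α).map T).prod

def wordOfFn {n k : ℕ} (f : Fin k → Fin n) : Word n := FreeMonoid.ofList (List.ofFn f)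

def rowSum {n : ℕ} {H : Type*} [NormedAddCommGroup H] [InnerProductSpace ℂ H]
    [CompleteSpace H] (T : Fin n → H →L[ℂ] H) (k : ℕ) : H →L[ℂ] H :=
  ∑ f : Fin k → Fin n, wordOp T (wordOfFn f) * adjoint (wordOp T (wordOfFn f))

def jsr {n : ℕ} {H : Type*} [NormedAddCommGroup H] [InnerProductSpace ℂ H]
    [CompleteSpace H] (T : Fin n → H →L[ℂ] H) : ℝ :=
  limUnder atTop fun k : ℕ => ‖rowSum T k‖ ^ ((1 : ℝ) / (2 * k))

def muProd {n : ℕ} (μ : Word n → ℝ) (β α : Word n) : ℝ :=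
  ((List.range (FreeMonoid.length β)).map
    fun j => μ (FreeMonoid.ofList ((FreeMonoid.toList β).drop j) * α)).prod

def IsWeightedShift {n : ℕ} (μ : Word n → ℝ) (W : Fin n → Fock n →L[ℂ] Fock n) : Prop :=
  ∀ (i : Fin n) (α : Word n),
    W i (fockE α) = (μ (FreeMonoid.of i * α) : ℂ) • fockE (FreeMonoid.of i * α)

def BddWeights {n : ℕ} (μ : Word n → ℝ) : Prop :=
  ∀ i : Fin n, BddAbove (Set.range fun α : Word n => μ (FreeMonoid.of i * α))

def IsWeightedShiftTensor {n : ℕ} {H : Type*} [NormedAddCommGroup H] [InnerProductSpace ℂ H]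
    (μ : Word n → ℝ)
    (Wt : Fin n → lp (fun _ : Word n => H) 2 →L[ℂ] lp (fun _ : Word n => H) 2) : Prop :=
  ∀ (i : Fin n) (α : Word n) (h : H),
    Wt i (lp.single 2 α h) = (μ (FreeMonoid.of i * α) : ℂ) • lp.single 2 (FreeMonoid.of i * α) h

def polyOp {n : ℕ} {H : Type*} [NormedAddCommGroup H] [InnerProductSpace ℂ H]
    (T : Fin n → H →L[ℂ] H) (c : Word n →₀ ℂ) : H →L[ℂ] H :=
  c.sum fun α z => z • wordOp T α

/-!
Take the weights `μ_β = r` for `|β| < m` and `0` beyond, so that `W` is `r` times the left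
creation operators truncated at length `m`. Nilpotency of `T` makes
`X h = ∑_{|β|<m} r^{-|β|} e_β ⊗ T_β^* h` intertwine `T_i^*` with `W_i^* ⊗ I`. Its
`e_∅`-coordinate is `h`, so `‖h‖ ≤ ‖X h‖`, while `‖X‖ ≤ K(r) := ∑_{|β|<m} r^{-|β|} ‖T_β‖`.
The `e_β`-coordinate of `p(W) e_∅` is `r^{|β|} c_β`, whence
`‖p(T)‖ ≤ ∑ |c_β| ‖T_β‖ ≤ K(r) ‖p(W)‖`. As `K(r) ≤ 1 + O(1/r)` and
`√(∑_{k<m} 1/(k+1)²) > 1` for `m ≥ 2`, a large `r` gives both bounds.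
-/

open FreeMonoid

variable {n : ℕ}

theorem length_wordOfFn {k : ℕ} (f : Fin k → Fin n) : (wordOfFn f).length = k :=
  List.length_ofFn

theorem exists_wordOfFn_eq {k : ℕ} (β : Word n) (h : β.length = k) :
    ∃ f : Fin k → Fin n, wordOfFn f = β := by
  subst h
  exact ⟨β.toList.get, List.ofFn_get _⟩

def wordsLengthLT (n m : ℕ) : Finset (Word n) :=
  (Finset.range m).biUnion fun k => Finset.univ.image (wordOfFn (n := n) (k := k))

theorem mem_wordsLengthLT {m : ℕ} {α : Word n} : α ∈ wordsLengthLT n m ↔ α.length < m := by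
  simp only [wordsLengthLT, Finset.mem_biUnion, Finset.mem_range, Finset.mem_image,
    Finset.mem_univ, true_and]
  constructor
  · rintro ⟨k, hk, f, rfl⟩
    rwa [length_wordOfFn]
  · exact fun h => ⟨_, h, exists_wordOfFn_eq α rfl⟩

section WordOp

variable {H : Type*} [NormedAddCommGroup H] [InnerProductSpace ℂ H] (T : Fin n → H →L[ℂ] H)

theorem wordOp_eq_lift (α : Word n) : wordOp T α = FreeMonoid.lift T α :=
  (FreeMonoid.lift_apply T α).symm

@[simp]
theorem wordOp_one : wordOp T 1 = 1 := rfl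

theorem wordOp_mul (α β : Word n) : wordOp T (α * β) = wordOp T α * wordOp T β := by
  simp only [wordOp_eq_lift, map_mul]

theorem wordOp_of_mul (i : Fin n) (α : Word n) : wordOp T (of i * α) = T i * wordOp T α := by
  rw [wordOp_mul, wordOp_eq_lift T (of i), lift_eval_of]

theorem wordOp_eq_zero_of_le_length {m : ℕ}
    (hnil : ∀ f : Fin m → Fin n, wordOp T (wordOfFn f) = 0) {α : Word n} (h : m ≤ α.length) :
    wordOp T α = 0 := by
  obtain ⟨f, hf⟩ := exists_wordOfFn_eq (k := m) (ofList (α.toList.take m))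
    (by simp only [FreeMonoid.length, toList_ofList, List.length_take]; exact min_eq_left h)
  have hα : α = wordOfFn f * ofList (α.toList.drop m) := by
    rw [hf, ← ofList_append, List.take_append_drop, ofList_toList]
  rw [hα, wordOp_mul, hnil, zero_mul]

end WordOp

section Weights

theorem muProd_one (μ : Word n → ℝ) (α : Word n) : muProd μ 1 α = 1 := rfl

theorem muProd_of_mul (μ : Word n → ℝ) (i : Fin n) (β α : Word n) :
    muProd μ (of i * β) α = μ (of i * β * α) * muProd μ β α := by
  rw [muProd, muProd, FreeMonoid.length_mul, length_of, add_comm, List.range_succ_eq_map,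
    List.map_cons, List.map_map, List.prod_cons]
  rfl

theorem muProd_eq_zero_of_le_length {μ : Word n → ℝ} {m : ℕ}
    (hμ : ∀ γ : Word n, m ≤ γ.length → μ γ = 0) (hm : 0 < m) {β : Word n} (h : m ≤ β.length)
    (α : Word n) : muProd μ β α = 0 := by
  induction β using FreeMonoid.inductionOn' with
  | one => simp only [length_one] at h; omega
  | of_mul i β _ =>
    rw [muProd_of_mul, hμ, zero_mul]
    simp only [FreeMonoid.length_mul, length_of] at h ⊢
    omega

end Weights

section Truncation

def truncWeight (m : ℕ) (r : ℝ) (β : Word n) : ℝ := if β.length < m then r else 0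

variable {m : ℕ} {r : ℝ}

theorem truncWeight_of_lt {β : Word n} (h : β.length < m) : truncWeight m r β = r := if_pos h

theorem muProd_truncWeight {β : Word n} (h : β.length < m) :
    muProd (truncWeight m r) β 1 = r ^ β.length := by
  induction β using FreeMonoid.inductionOn' with
  | one => rfl
  | of_mul i β ih =>
    rw [FreeMonoid.length_mul, length_of] at h ⊢
    rw [muProd_of_mul, ih (by omega), mul_one, truncWeight_of_lt (by simpa using h), add_comm,
      pow_succ']

theorem truncWeight_of_le {β : Word n} (h : m ≤ β.length) : truncWeight m r β = 0 :=
  if_neg h.not_gt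

theorem truncWeight_nonneg (hr : 0 ≤ r) (β : Word n) : 0 ≤ truncWeight m r β := by
  unfold truncWeight
  split_ifs <;> simp [hr]

theorem truncWeight_le (hr : 0 ≤ r) (β : Word n) : truncWeight m r β ≤ r := by
  unfold truncWeight
  split_ifs <;> simp [hr]

theorem bddWeights_truncWeight (hr : 0 ≤ r) : BddWeights (truncWeight (n := n) m r) := by
  refine fun i => ⟨r, ?_⟩
  rintro _ ⟨α, rfl⟩
  exact truncWeight_le hr _

end Truncation

section Shift

theorem lp.evalCLM_apply {𝕜 ι : Type*} {E : ι → Type*} [NormedRing 𝕜]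
    [∀ i, NormedAddCommGroup (E i)] [∀ i, Module 𝕜 (E i)] [∀ i, IsBoundedSMul 𝕜 (E i)]
    {p : ENNReal} [Fact (1 ≤ p)] (i : ι) (x : lp E p) : lp.evalCLM 𝕜 E p i x = x i := rfl

abbrev FockTensor (n : ℕ) (E : Type*) [NormedAddCommGroup E] :=
  lp (fun _ : Word n => E) 2

def finShift {E : Type*} [NormedAddCommGroup E] [NormedSpace ℂ E] (s : Finset (Word n))
    (μ : Word n → ℝ) (i : Fin n) :
    FockTensor n E →L[ℂ] FockTensor n E :=
  ∑ α ∈ s, (μ (of i * α) : ℂ) •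
    (lp.singleContinuousLinearMap ℂ _ 2 (of i * α)).comp (lp.evalCLM ℂ _ 2 α)

theorem isWeightedShiftTensor_finShift {E : Type*} [NormedAddCommGroup E]
    [InnerProductSpace ℂ E] {s : Finset (Word n)} {μ : Word n → ℝ}
    (hμ : ∀ i, ∀ α ∉ s, μ (of i * α) = 0) :
    IsWeightedShiftTensor μ (finShift (E := E) s μ) := by
  intro i α h
  rw [finShift, sum_apply, Finset.sum_eq_single α]
  · simp only [smul_apply, comp_apply, lp.singleContinuousLinearMap_apply, lp.evalCLM_apply,
      lp.single_apply_self]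
  · intro β _ hβ
    simp only [smul_apply, comp_apply, lp.singleContinuousLinearMap_apply, lp.evalCLM_apply,
      lp.single_apply_ne _ _ _ hβ, lp.single_zero, smul_zero]
  · intro hα
    rw [smul_apply, hμ i α hα, Complex.ofReal_zero, zero_smul]

end Shift

namespace IsWeightedShiftTensor

variable {E : Type*} [NormedAddCommGroup E] [InnerProductSpace ℂ E] {μ : Word n → ℝ}
  {Wt : Fin n → FockTensor n E →L[ℂ] FockTensor n E}

theorem wordOp_single (hW : IsWeightedShiftTensor μ Wt) (β α : Word n) (h : E) :
    wordOp Wt β (lp.single 2 α h) = (muProd μ β α : ℂ) • lp.single 2 (β * α) h := by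
  induction β using FreeMonoid.inductionOn' with
  | one => simp [muProd_one]
  | of_mul i β ih =>
    rw [wordOp_of_mul, mul_apply_eq_comp, ih, map_smul, hW, smul_smul, muProd_of_mul,
      Complex.ofReal_mul, mul_assoc, mul_comm]

theorem wordOp_eq_zero (hW : IsWeightedShiftTensor μ Wt) {β : Word n}
    (hβ : ∀ α, muProd μ β α = 0) : wordOp Wt β = 0 :=
  lp.ext_continuousLinearMap (by norm_num) fun α => by
    ext h
    simp [hW.wordOp_single, hβ]

theorem wordOp_ne_zero [Nontrivial E] (hW : IsWeightedShiftTensor μ Wt) {β α : Word n}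
    (hβ : muProd μ β α ≠ 0) : wordOp Wt β ≠ 0 := by
  obtain ⟨h, hh⟩ := exists_ne (0 : E)
  intro h0
  have := congrArg (fun x : FockTensor n E => x (β * α)) (hW.wordOp_single β α h)
  rw [h0, zero_apply, lp.coeFn_zero, Pi.zero_apply, lp.coeFn_smul, Pi.smul_apply,
    lp.single_apply_self] at this
  exact smul_ne_zero (by exact_mod_cast hβ) hh this.symm

theorem adjoint_apply [CompleteSpace E] (hW : IsWeightedShiftTensor μ Wt) (i : Fin n)
    (y : FockTensor n E) (α : Word n) :
    adjoint (Wt i) y α = (μ (of i * α) : ℂ) • y (of i * α) := by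
  refine ext_inner_left ℂ fun (v : E) => ?_
  calc inner ℂ v (adjoint (Wt i) y α) = inner ℂ (lp.single 2 α v) (adjoint (Wt i) y) :=
        (lp.inner_single_left (G := fun _ : Word n => E) α v _).symm
    _ = inner ℂ (Wt i (lp.single 2 α v)) y := adjoint_inner_right _ _ _
    _ = inner ℂ v ((μ (of i * α) : ℂ) • y (of i * α)) := by
        rw [hW, inner_smul_left, lp.inner_single_left, inner_smul_right, Complex.conj_ofReal]

theorem polyOp_single_one_apply {W : Fin n → Fock n →L[ℂ] Fock n}
    (hW : IsWeightedShiftTensor μ W) (co : Word n →₀ ℂ) (β : Word n) :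
    polyOp W co (lp.single 2 1 1) β = co β * muProd μ β 1 := by
  simp only [polyOp, Finsupp.sum, sum_apply, smul_apply, hW.wordOp_single, mul_one, smul_smul,
    lp.coeFn_sum, Finset.sum_apply, lp.coeFn_smul, Pi.smul_apply, lp.single_apply,
    Pi.single_apply, smul_eq_mul, mul_ite, mul_zero, Finset.sum_ite_eq]
  rw [ite_eq_left_iff, Finsupp.mem_support_iff, not_not]
  intro hβ
  rw [hβ, zero_mul]

theorem norm_mul_muProd_le {W : Fin n → Fock n →L[ℂ] Fock n}
    (hW : IsWeightedShiftTensor μ W) (co : Word n →₀ ℂ) (β : Word n) :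
    ‖co β‖ * |muProd μ β 1| ≤ ‖polyOp W co‖ :=
  calc ‖co β‖ * |muProd μ β 1| = ‖polyOp W co (lp.single 2 1 1) β‖ := by
        rw [hW.polyOp_single_one_apply, norm_mul, Complex.norm_real, Real.norm_eq_abs]
    _ ≤ ‖polyOp W co (lp.single 2 1 1)‖ := lp.norm_apply_le_norm two_ne_zero _ _
    _ ≤ ‖polyOp W co‖ * ‖(lp.single 2 1 1 : Fock n)‖ := le_opNorm _ _
    _ = ‖polyOp W co‖ := by rw [lp.norm_single (by norm_num), norm_one, mul_one]

end IsWeightedShiftTensor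

section Norms

variable {H : Type*} [NormedAddCommGroup H] [InnerProductSpace ℂ H] (T : Fin n → H →L[ℂ] H)

def weightedWordNormSum (m : ℕ) (r : ℝ) : ℝ :=
  ∑ β ∈ wordsLengthLT n m, (r ^ β.length)⁻¹ * ‖wordOp T β‖

theorem weightedWordNormSum_le {m : ℕ} (hm : 0 < m) {r : ℝ} (hr : 1 ≤ r) :
    weightedWordNormSum T m r ≤ 1 + (∑ β ∈ wordsLengthLT n m, ‖wordOp T β‖) / r := by
  have h1 : (1 : Word n) ∈ wordsLengthLT n m := mem_wordsLengthLT.2 hm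
  have hrest : ∑ β ∈ (wordsLengthLT n m).erase 1, (r ^ β.length)⁻¹ * ‖wordOp T β‖
      ≤ (∑ β ∈ wordsLengthLT n m, ‖wordOp T β‖) / r := by
    rw [div_eq_inv_mul, Finset.mul_sum]
    refine (Finset.sum_le_sum fun β hβ => ?_).trans
      (Finset.sum_le_sum_of_subset_of_nonneg (Finset.erase_subset _ _) fun _ _ _ => by positivity)
    have hβ : β.length ≠ 0 := fun h => Finset.ne_of_mem_erase hβ (length_eq_zero.1 h)
    gcongr
    exact le_self_pow₀ hr hβ
  rw [weightedWordNormSum, ← Finset.add_sum_erase _ _ h1]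
  gcongr
  rw [length_one, pow_zero, inv_one, one_mul, wordOp_one]
  exact norm_id_le

theorem exists_weightedWordNormSum_le {m : ℕ} (hm : 0 < m) {c : ℝ} (hc : 1 < c) :
    ∃ r, 1 ≤ r ∧ weightedWordNormSum T m r ≤ c := by
  set D := ∑ β ∈ wordsLengthLT n m, ‖wordOp T β‖
  set r := max 1 (D / (c - 1))
  have hr : 1 ≤ r := le_max_left _ _
  have hD : D / r ≤ c - 1 := by
    rw [div_le_iff₀ (by positivity), mul_comm, ← div_le_iff₀ (by linarith)]
    exact le_max_right _ _
  exact ⟨r, hr, (weightedWordNormSum_le T hm hr).trans (by linarith)⟩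

theorem norm_polyOp_le_sum (co : Word n →₀ ℂ) :
    ‖polyOp T co‖ ≤ ∑ α ∈ co.support, ‖co α‖ * ‖wordOp T α‖ :=
  (norm_sum_le _ _).trans_eq (Finset.sum_congr rfl fun _ _ => norm_smul _ _)

theorem norm_polyOp_le {m : ℕ} (hnil : ∀ f : Fin m → Fin n, wordOp T (wordOfFn f) = 0)
    {r : ℝ} (hr : 0 < r) {W : Fin n → Fock n →L[ℂ] Fock n}
    (hW : IsWeightedShiftTensor (truncWeight m r) W) (co : Word n →₀ ℂ) :
    ‖polyOp T co‖ ≤ weightedWordNormSum T m r * ‖polyOp W co‖ := by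
  set P := ‖polyOp W co‖
  have hcoeff : ∀ α : Word n, α.length < m → ‖co α‖ ≤ P * (r ^ α.length)⁻¹ := by
    intro α hα
    have := hW.norm_mul_muProd_le co α
    rw [muProd_truncWeight hα, abs_of_pos (pow_pos hr _)] at this
    rwa [le_mul_inv_iff₀ (pow_pos hr _)]
  calc ‖polyOp T co‖ ≤ ∑ α ∈ co.support, ‖co α‖ * ‖wordOp T α‖ := norm_polyOp_le_sum T co
    _ = ∑ α ∈ co.support with α.length < m, ‖co α‖ * ‖wordOp T α‖ := by
        refine (Finset.sum_filter_of_ne fun α _ hne => ?_).symm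
        by_contra hα
        exact hne (by rw [wordOp_eq_zero_of_le_length T hnil (not_lt.1 hα), norm_zero, mul_zero])
    _ ≤ ∑ α ∈ co.support with α.length < m, P * ((r ^ α.length)⁻¹ * ‖wordOp T α‖) := by
        refine Finset.sum_le_sum fun α hα => ?_
        rw [← mul_assoc]
        exact mul_le_mul_of_nonneg_right (hcoeff α (Finset.mem_filter.1 hα).2) (norm_nonneg _)
    _ ≤ ∑ α ∈ wordsLengthLT n m, P * ((r ^ α.length)⁻¹ * ‖wordOp T α‖) :=
        Finset.sum_le_sum_of_subset_of_nonneg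
          (fun α hα => mem_wordsLengthLT.2 (Finset.mem_filter.1 hα).2)
          fun _ _ _ => mul_nonneg (norm_nonneg _) (by positivity)
    _ = weightedWordNormSum T m r * P := by rw [← Finset.mul_sum, weightedWordNormSum, mul_comm]

end Norms

section Embedding

variable {H : Type*} [NormedAddCommGroup H] [InnerProductSpace ℂ H] [CompleteSpace H]
  (T : Fin n → H →L[ℂ] H)

def modelEmbedding (m : ℕ) (r : ℝ) : H →L[ℂ] FockTensor n H :=
  ∑ β ∈ wordsLengthLT n m,
    (lp.singleContinuousLinearMap ℂ _ 2 β).comp (((r : ℂ) ^ β.length)⁻¹ • adjoint (wordOp T β))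

theorem modelEmbedding_apply (m : ℕ) (r : ℝ) (h : H) (γ : Word n) :
    modelEmbedding T m r h γ =
      if γ.length < m then ((r : ℂ) ^ γ.length)⁻¹ • adjoint (wordOp T γ) h else 0 := by
  simp only [modelEmbedding, sum_apply, smul_apply, comp_apply,
    lp.singleContinuousLinearMap_apply, lp.coeFn_sum, Finset.sum_apply, lp.single_apply,
    Pi.single_apply, Finset.sum_ite_eq, mem_wordsLengthLT]

theorem modelEmbedding_apply_of_nilpotent {m : ℕ}
    (hnil : ∀ f : Fin m → Fin n, wordOp T (wordOfFn f) = 0) (r : ℝ) (h : H) (γ : Word n) :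
    modelEmbedding T m r h γ = ((r : ℂ) ^ γ.length)⁻¹ • adjoint (wordOp T γ) h := by
  rw [modelEmbedding_apply]
  split_ifs with hγ
  · rfl
  · rw [wordOp_eq_zero_of_le_length T hnil (not_lt.1 hγ), map_zero, zero_apply, smul_zero]

theorem norm_le_norm_modelEmbedding {m : ℕ} (hm : 0 < m) (r : ℝ) (h : H) :
    ‖h‖ ≤ ‖modelEmbedding T m r h‖ := by
  have h1 : modelEmbedding T m r h 1 = h := by
    rw [modelEmbedding_apply, length_one, if_pos hm]
    simp [adjoint_one]
  calc ‖h‖ = ‖modelEmbedding T m r h 1‖ := by rw [h1]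
    _ ≤ _ := lp.norm_apply_le_norm two_ne_zero _ _

theorem norm_modelEmbedding_le (m : ℕ) {r : ℝ} (hr : 0 ≤ r) :
    ‖modelEmbedding T m r‖ ≤ weightedWordNormSum T m r := by
  rw [modelEmbedding, weightedWordNormSum]
  refine le_trans (norm_sum_le (E := H →L[ℂ] FockTensor n H) _ _)
    (Finset.sum_le_sum fun β _ => (opNorm_comp_le _ _).trans ?_)
  have hsingle : ‖lp.singleContinuousLinearMap ℂ (fun _ : Word n => H) 2 β‖ ≤ 1 :=
    opNorm_le_bound _ zero_le_one fun x => by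
      rw [lp.singleContinuousLinearMap_apply, lp.norm_single (by norm_num), one_mul]
  rw [norm_smul, norm_inv, norm_pow, Complex.norm_real, Real.norm_of_nonneg hr,
    LinearIsometryEquiv.norm_map]
  exact mul_le_of_le_one_left (by positivity) hsingle

theorem modelEmbedding_comp_adjoint {m : ℕ}
    (hnil : ∀ f : Fin m → Fin n, wordOp T (wordOfFn f) = 0) {r : ℝ} (hr : r ≠ 0)
    {Wt : Fin n → FockTensor n H →L[ℂ] FockTensor n H}
    (hW : IsWeightedShiftTensor (truncWeight m r) Wt) (i : Fin n) :
    (modelEmbedding T m r).comp (adjoint (T i)) = (adjoint (Wt i)).comp (modelEmbedding T m r) := by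
  ext h : 1
  refine lp.ext (funext fun α => ?_)
  have hT : adjoint (wordOp T α) (adjoint (T i) h) = adjoint (wordOp T (of i * α)) h := by
    rw [wordOp_of_mul, mul_def, adjoint_comp, comp_apply]
  rw [comp_apply, comp_apply, hW.adjoint_apply, modelEmbedding_apply_of_nilpotent T hnil r,
    modelEmbedding_apply_of_nilpotent T hnil r, hT, smul_smul, truncWeight]
  split_ifs with hα
  · congr 1
    have hr' : (r : ℂ) ≠ 0 := by exact_mod_cast hr
    rw [FreeMonoid.length_mul, length_of]
    field_simp
    ring
  · rw [wordOp_eq_zero_of_le_length T hnil (not_lt.1 hα), map_zero, zero_apply, smul_zero,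
      smul_zero]

end Embedding

theorem one_lt_sqrt_sum_inv_sq {m : ℕ} (hm : 2 ≤ m) :
    1 < √(∑ k ∈ Finset.range m, 1 / ((k : ℝ) + 1) ^ 2) := by
  rw [Real.lt_sqrt zero_le_one, one_pow]
  calc (1 : ℝ) < ∑ k ∈ Finset.range 2, 1 / ((k : ℝ) + 1) ^ 2 := by
        norm_num [Finset.sum_range_succ]
    _ ≤ _ := Finset.sum_le_sum_of_subset_of_nonneg (Finset.range_subset_range.2 hm)
        fun _ _ _ => by positivity

theorem stmt_14_general (n : ℕ) (hn : 1 ≤ n)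
    {H : Type*} [NormedAddCommGroup H] [InnerProductSpace ℂ H] [CompleteSpace H]
    (T : Fin n → H →L[ℂ] H) (m : ℕ) (hm : 2 ≤ m)
    (hnil : ∀ f : Fin m → Fin n, wordOp T (wordOfFn f) = 0) :
    ∃ μ : Word n → ℝ,
      (∀ β : Word n, 1 ≤ FreeMonoid.length β → 0 ≤ μ β) ∧ BddWeights μ ∧
      (∀ β : Word n, 1 ≤ FreeMonoid.length β → FreeMonoid.length β ≤ m - 1 → 0 < μ β) ∧
      (∀ β : Word n, m ≤ FreeMonoid.length β → μ β = 0) ∧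
      ∃ W : Fin n → Fock n →L[ℂ] Fock n, IsWeightedShift μ W ∧
        (∀ f : Fin m → Fin n, wordOp W (wordOfFn f) = 0) ∧
        (∃ f : Fin (m - 1) → Fin n, wordOp W (wordOfFn f) ≠ 0) ∧
        (∃ Wt : Fin n → lp (fun _ : Word n => H) 2 →L[ℂ] lp (fun _ : Word n => H) 2,
          IsWeightedShiftTensor μ Wt ∧
          ∃ (X : H →L[ℂ] lp (fun _ : Word n => H) 2) (c : ℝ), 0 < c ∧
            (∀ h : H, c * ‖h‖ ≤ ‖X h‖) ∧
            (∀ i : Fin n, ∀ y ∈ Set.range X, adjoint (Wt i) y ∈ Set.range X) ∧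
            (∀ i : Fin n, X.comp (adjoint (T i)) = (adjoint (Wt i)).comp X) ∧
            ‖X‖ * c⁻¹ ≤ Real.sqrt (∑ k ∈ Finset.range m, 1 / ((k : ℝ) + 1) ^ 2)) ∧
        ∀ co : Word n →₀ ℂ,
          ‖polyOp T co‖ ≤
            Real.sqrt (∑ k ∈ Finset.range m, 1 / ((k : ℝ) + 1) ^ 2) * ‖polyOp W co‖ := by
  obtain ⟨r, hr, hK⟩ :=
    exists_weightedWordNormSum_le T (by omega : 0 < m) (one_lt_sqrt_sum_inv_sq hm)
  have hr0 : 0 < r := by linarith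
  have hμ : ∀ i, ∀ α ∉ wordsLengthLT n m, truncWeight m r (of i * α) = 0 := fun i α hα => by
    rw [mem_wordsLengthLT, not_lt] at hα
    exact truncWeight_of_le (by rw [FreeMonoid.length_mul, length_of]; omega)
  have hW := isWeightedShiftTensor_finShift (E := ℂ) hμ
  have hWt := isWeightedShiftTensor_finShift (E := H) hμ
  have hXW := modelEmbedding_comp_adjoint T hnil hr0.ne' hWt
  refine ⟨truncWeight m r, fun β _ => truncWeight_nonneg hr0.le β, bddWeights_truncWeight hr0.le,
    fun β _ hβ => (truncWeight_of_lt (by omega)).trans_gt hr0, fun β => truncWeight_of_le,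
    finShift _ _, fun i α => hW i α 1,
    fun f => hW.wordOp_eq_zero (muProd_eq_zero_of_le_length (fun γ => truncWeight_of_le)
      (by omega) (length_wordOfFn f).ge),
    ⟨fun _ => ⟨0, hn⟩, hW.wordOp_ne_zero (α := 1) ?_⟩,
    ⟨finShift _ _, hWt, modelEmbedding T m r, 1, one_pos,
      fun h => (one_mul ‖h‖).trans_le (norm_le_norm_modelEmbedding T (by omega) r h), ?_, hXW,
      by simpa using (norm_modelEmbedding_le T m hr0.le).trans hK⟩,
    fun co => (norm_polyOp_le T hnil hr0 hW co).trans (by gcongr)⟩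
  · rw [muProd_truncWeight (by rw [length_wordOfFn]; omega)]
    positivity
  · rintro i _ ⟨h, rfl⟩
    exact ⟨adjoint (T i) h, DFunLike.congr_fun (hXW i) h⟩

theorem stmt_14 (n : ℕ) (hn : 1 ≤ n)
    {H : Type*} [NormedAddCommGroup H] [InnerProductSpace ℂ H] [CompleteSpace H]
    (T : Fin n → H →L[ℂ] H) (m : ℕ) (hm : 2 ≤ m)
    (hnil : ∀ f : Fin m → Fin n, wordOp T (wordOfFn f) = 0)
    (hnz : ∃ f : Fin (m - 1) → Fin n, wordOp T (wordOfFn f) ≠ 0) :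
    ∃ μ : Word n → ℝ,
      (∀ β : Word n, 1 ≤ FreeMonoid.length β → 0 ≤ μ β) ∧ BddWeights μ ∧
      (∀ β : Word n, 1 ≤ FreeMonoid.length β → FreeMonoid.length β ≤ m - 1 → 0 < μ β) ∧
      (∀ β : Word n, m ≤ FreeMonoid.length β → μ β = 0) ∧
      ∃ W : Fin n → Fock n →L[ℂ] Fock n, IsWeightedShift μ W ∧
        (∀ f : Fin m → Fin n, wordOp W (wordOfFn f) = 0) ∧
        (∃ f : Fin (m - 1) → Fin n, wordOp W (wordOfFn f) ≠ 0) ∧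
        (∃ Wt : Fin n → lp (fun _ : Word n => H) 2 →L[ℂ] lp (fun _ : Word n => H) 2,
          IsWeightedShiftTensor μ Wt ∧
          ∃ (X : H →L[ℂ] lp (fun _ : Word n => H) 2) (c : ℝ), 0 < c ∧
            (∀ h : H, c * ‖h‖ ≤ ‖X h‖) ∧
            (∀ i : Fin n, ∀ y ∈ Set.range X, adjoint (Wt i) y ∈ Set.range X) ∧
            (∀ i : Fin n, X.comp (adjoint (T i)) = (adjoint (Wt i)).comp X) ∧
            ‖X‖ * c⁻¹ ≤ Real.sqrt (∑ k ∈ Finset.range m, 1 / ((k : ℝ) + 1) ^ 2)) ∧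
        ∀ co : Word n →₀ ℂ,
          ‖polyOp T co‖ ≤
            Real.sqrt (∑ k ∈ Finset.range m, 1 / ((k : ℝ) + 1) ^ 2) * ‖polyOp W co‖ :=
  stmt_14_general n hn T m hm hnil
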